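/- (Model error bound (4.14) for the structured quasi-Newton subproblem of the linear eigenvalue problem.) Let C, C^k ∈ ℝ^{n×n} be symmetric, let X, Z ∈ ℝ^{n×p} satisfy XᵀX = ZᵀZ = I_p, suppose CX = C^kX, and let τ ≥ 0. Define f(Y) := (1/2)tr(YᵀCY) and m(Y) := (1/2)tr(YᵀC^kY) + (τ/4)‖YYᵀ − XXᵀ‖_F². Then f(Z) − f(X) − (m(Z) − m(X)) ≤ (1/2)‖C − C^k‖₂ ‖ZZᵀ − XXᵀ‖_F², where ‖·‖₂ denotes the spectral norm. -/

import Mathlib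

/-!
Put `E = C - C^k` and `D = ZZᵀ - XXᵀ`. Since `C^k` agrees with `C` at `X`, the terms at `X` cancel
and the model error is `(1/2) tr(ZᵀEZ) - (τ/4) ‖D‖_F²`. The secant condition `EX = 0` and the
symmetry of `E` make `XXᵀ` invisible on both sides of `E`, so `DED = ZZᵀEZZᵀ`, whose trace is
`tr(ZᵀEZ)` because `ZᵀZ = I`. Applying `vᵀEv ≤ ‖E‖₂ ‖v‖²` to the columns of `D` gives
`tr(DED) ≤ ‖E‖₂ ‖D‖_F²`, and the regularization term is nonpositive.
-/

open Matrix

/-- The objective `f(Y) = (1/2) tr(YᵀCY)` of the linear eigenvalue problem. -/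
noncomputable def eigObj {n p : ℕ} (C : Matrix (Fin n) (Fin n) ℝ)
    (Y : Matrix (Fin n) (Fin p) ℝ) : ℝ :=
  (1 / 2) * (Yᵀ * C * Y).trace

/-- The regularized model `m(Y) = (1/2) tr(YᵀC^kY) + (τ/4)‖YYᵀ − XXᵀ‖_F²`. -/
noncomputable def eigModel {n p : ℕ} (Ck : Matrix (Fin n) (Fin n) ℝ)
    (X : Matrix (Fin n) (Fin p) ℝ) (τ : ℝ) (Y : Matrix (Fin n) (Fin p) ℝ) : ℝ :=
  (1 / 2) * (Yᵀ * Ck * Y).trace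
    + (τ / 4) * ((Y * Yᵀ - X * Xᵀ)ᵀ * (Y * Yᵀ - X * Xᵀ)).trace

namespace Matrix

section SpectralBound

variable {ι κ : Type*} [Fintype ι] [DecidableEq ι] [Fintype κ]

open scoped RealInnerProductSpace in
theorem dotProduct_mulVec_le_opNorm_mul (A : Matrix ι ι ℝ) (x : ι → ℝ) :
    x ⬝ᵥ A *ᵥ x ≤ ‖toEuclideanCLM (𝕜 := ℝ) A‖ * (x ⬝ᵥ x) := by
  set w : EuclideanSpace ℝ ι := WithLp.toLp 2 x
  have hw : x ⬝ᵥ x = ‖w‖ ^ 2 := by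
    rw [← real_inner_self_eq_norm_sq, EuclideanSpace.inner_eq_star_dotProduct]
    simp [w]
  calc x ⬝ᵥ A *ᵥ x = ⟪w, toEuclideanCLM (𝕜 := ℝ) A w⟫ := (inner_toEuclideanCLM A w w).symm
    _ ≤ ‖w‖ * ‖toEuclideanCLM (𝕜 := ℝ) A w‖ := real_inner_le_norm _ _
    _ ≤ ‖w‖ * (‖toEuclideanCLM (𝕜 := ℝ) A‖ * ‖w‖) := by
      gcongr; exact (toEuclideanCLM (𝕜 := ℝ) A).le_opNorm w
    _ = ‖toEuclideanCLM (𝕜 := ℝ) A‖ * (x ⬝ᵥ x) := by rw [hw]; ring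

theorem trace_transpose_mul_mul_le (A : Matrix ι ι ℝ) (D : Matrix ι κ ℝ) :
    (Dᵀ * A * D).trace ≤ ‖toEuclideanCLM (𝕜 := ℝ) A‖ * (Dᵀ * D).trace := by
  simp only [trace, diag, Finset.mul_sum]
  refine Finset.sum_le_sum fun j _ => ?_
  rw [Matrix.mul_assoc]
  exact dotProduct_mulVec_le_opNorm_mul A (Dᵀ j)

end SpectralBound

theorem trace_transpose_mul_self_nonneg {ι κ : Type*} [Fintype ι] [Fintype κ]
    (D : Matrix ι κ ℝ) : 0 ≤ (Dᵀ * D).trace :=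
  (posSemidef_conjTranspose_mul_self D).trace_nonneg

theorem trace_sub_transpose_mul_mul_sub_eq {m k R : Type*} [Fintype m] [Fintype k]
    [DecidableEq k] [CommRing R] {E : Matrix m m R} {X Z : Matrix m k R}
    (hE : Eᵀ = E) (hEX : E * X = 0) (hZ : Zᵀ * Z = 1) :
    ((Z * Zᵀ - X * Xᵀ)ᵀ * E * (Z * Zᵀ - X * Xᵀ)).trace = (Zᵀ * E * Z).trace := by
  have hXE : Xᵀ * E = 0 := by rw [← hE, ← transpose_mul, hEX, transpose_zero]
  have hEX' (M : Matrix k m R) : E * (X * M) = 0 := by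
    rw [← Matrix.mul_assoc, hEX, Matrix.zero_mul]
  have hXE' (M : Matrix m m R) : Xᵀ * (E * M) = 0 := by
    rw [← Matrix.mul_assoc, hXE, Matrix.zero_mul]
  have hsandwich : (Z * Zᵀ - X * Xᵀ)ᵀ * E * (Z * Zᵀ - X * Xᵀ) = Z * (Zᵀ * E * Z * Zᵀ) := by
    simp only [transpose_sub, transpose_mul, transpose_transpose, Matrix.sub_mul, Matrix.mul_sub,
      Matrix.mul_assoc, hEX', hXE', Matrix.mul_zero, sub_zero]
  rw [hsandwich, trace_mul_comm, Matrix.mul_assoc (Zᵀ * E * Z), hZ, Matrix.mul_one]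

end Matrix

theorem eigObj_sub_eigModel_sub_eq {n p : ℕ} {C Ck : Matrix (Fin n) (Fin n) ℝ}
    {X : Matrix (Fin n) (Fin p) ℝ} (hsec : C * X = Ck * X) (τ : ℝ) (Z : Matrix (Fin n) (Fin p) ℝ) :
    eigObj C Z - eigObj C X - (eigModel Ck X τ Z - eigModel Ck X τ X)
      = (1 / 2) * (Zᵀ * (C - Ck) * Z).trace
        - (τ / 4) * ((Z * Zᵀ - X * Xᵀ)ᵀ * (Z * Zᵀ - X * Xᵀ)).trace := by
  have hX : (Xᵀ * C * X).trace = (Xᵀ * Ck * X).trace := by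
    rw [Matrix.mul_assoc, Matrix.mul_assoc, hsec]
  simp only [eigObj, eigModel, hX, sub_self, transpose_zero, Matrix.zero_mul, trace_zero,
    Matrix.mul_sub, Matrix.sub_mul, trace_sub]
  ring

theorem model_error_bound_general (n p : ℕ)
    (C Ck : Matrix (Fin n) (Fin n) ℝ) (hC : Cᵀ = C) (hCk : Ckᵀ = Ck)
    (X Z : Matrix (Fin n) (Fin p) ℝ)
    (hZ : Zᵀ * Z = 1)
    (hsec : C * X = Ck * X) (τ : ℝ) (hτ : 0 ≤ τ) :
    eigObj C Z - eigObj C X - (eigModel Ck X τ Z - eigModel Ck X τ X)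
      ≤ (1 / 2) * ‖Matrix.toEuclideanCLM (𝕜 := ℝ) (C - Ck)‖
          * ((Z * Zᵀ - X * Xᵀ)ᵀ * (Z * Zᵀ - X * Xᵀ)).trace := by
  have hE : (C - Ck)ᵀ = C - Ck := by rw [transpose_sub, hC, hCk]
  have hEX : (C - Ck) * X = 0 := by rw [Matrix.sub_mul, hsec, sub_self]
  rw [eigObj_sub_eigModel_sub_eq hsec, ← trace_sub_transpose_mul_mul_sub_eq hE hEX hZ]
  have hquad := trace_transpose_mul_mul_le (C - Ck) (Z * Zᵀ - X * Xᵀ)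
  have hreg : 0 ≤ τ / 4 * ((Z * Zᵀ - X * Xᵀ)ᵀ * (Z * Zᵀ - X * Xᵀ)).trace :=
    mul_nonneg (by positivity) (trace_transpose_mul_self_nonneg _)
  linarith

/-- Model error bound (4.14) for the structured quasi-Newton subproblem of the
linear eigenvalue problem:
`f(Z) − f(X) − (m(Z) − m(X)) ≤ (1/2)‖C − C^k‖₂ ‖ZZᵀ − XXᵀ‖_F²`. -/
theorem model_error_bound (n p : ℕ)
    (C Ck : Matrix (Fin n) (Fin n) ℝ) (hC : Cᵀ = C) (hCk : Ckᵀ = Ck)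
    (X Z : Matrix (Fin n) (Fin p) ℝ)
    (hX : Xᵀ * X = 1) (hZ : Zᵀ * Z = 1)
    (hsec : C * X = Ck * X) (τ : ℝ) (hτ : 0 ≤ τ) :
    eigObj C Z - eigObj C X - (eigModel Ck X τ Z - eigModel Ck X τ X)
      ≤ (1 / 2) * ‖Matrix.toEuclideanCLM (𝕜 := ℝ) (C - Ck)‖
          * ((Z * Zᵀ - X * Xᵀ)ᵀ * (Z * Zᵀ - X * Xᵀ)).trace :=
  model_error_bound_general n p C Ck hC hCk X Z hZ hsec τ hτ
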